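/- Let V be a finite set, let x be a fractional allocation on V, and let e ⊆ V be a nonempty hyperedge with a designated representative r(e) ∈ e; let d(e) = Σ_{i=1}^k (x(r(e),i) − min_{v ∈ e} x(v,i)). For θ ∈ (1/2, 1] define A(i,θ) = {v ∈ V : x(v,i) ≥ θ} for i = 1,…,k−1 and U(θ) = V \ (A(1,θ) ∪ ⋯ ∪ A(k−1,θ)). Say e is cut at θ if e is not entirely contained in a single one of the parts A(1,θ), …, A(k−1,θ), U(θ). Then the probability over a uniformly random θ ∈ (1/2, 1] that e is cut is at most 2 d(e). -/

import Mathlib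

/-!
Let `m i` be the minimum of `x · i` over `e`, and pick the vertex `u ∈ e` and label `j < k - 1`
maximising `x u j`. A cut threshold `θ` lies in `(m j, x u j]`: above `x u j` no vertex of `e` is
assigned a label, and at or below `m j` all of `e` gets label `j`. Since all rows of `x` have the
same sum, `d(e)` is also `∑ i, (x u i - m i)`, a sum of nonnegative terms one of which is
`x u j - m j`. So the cut thresholds have measure at most `d(e)`, against the measure `1/2` of
`(1/2, 1]`.
-/

open scoped BigOperators

/-- `min_{v ∈ e} g(v)` (with junk value `0` for `e = ∅`). -/
noncomputable def fmin {V : Type*} (e : Finset V) (g : V → ℝ) : ℝ :=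
  if h : e.Nonempty then e.inf' h g else 0

open MeasureTheory Finset

lemma fmin_le {V : Type*} {e : Finset V} {v : V} (hv : v ∈ e) (g : V → ℝ) :
    fmin e g ≤ g v := by
  rw [fmin, dif_pos ⟨v, hv⟩]
  exact inf'_le g hv

lemma sub_fmin_le_sum_sub_fmin {V ι : Type*} [Fintype ι] {x : V → ι → ℝ} {e : Finset V}
    {u re : V} (hu : u ∈ e) (hrow : ∑ i, x u i = ∑ i, x re i) (j : ι) :
    x u j - fmin e (x · j) ≤ ∑ i, (x re i - fmin e (x · i)) :=
  calc x u j - fmin e (x · j) ≤ ∑ i, (x u i - fmin e (x · i)) :=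
        single_le_sum (f := fun i => x u i - fmin e (x · i))
          (fun i _ => sub_nonneg.2 (fmin_le hu _)) (mem_univ j)
    _ = ∑ i, (x re i - fmin e (x · i)) := by simp only [sum_sub_distrib, hrow]

lemma exists_max_of_exists {V ι : Type*} [Fintype ι] {e : Finset V} {p : ι → Prop}
    [DecidablePred p] (f : V → ι → ℝ) (h : ∃ v ∈ e, ∃ i, p i) :
    ∃ u ∈ e, ∃ j, p j ∧ ∀ v ∈ e, ∀ i, p i → f v i ≤ f u j := by
  obtain ⟨v, hv, i, hi⟩ := h
  obtain ⟨⟨u, j⟩, huj, hmax⟩ := exists_max_image (e ×ˢ univ.filter p) (fun q => f q.1 q.2)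
    ⟨(v, i), by simp [hv, hi]⟩
  simp only [mem_product, mem_filter, mem_univ, true_and] at huj
  exact ⟨u, huj.1, j, huj.2, fun v hv i hi => hmax (v, i) (by simp [hv, hi])⟩

def IsCutAt {V : Type*} [Fintype V] [DecidableEq V] (k : ℕ) (x : V → Fin k → ℝ)
    (e : Finset V) (θ : ℝ) : Prop :=
  ¬ ((∃ i : Fin k, (i : ℕ) < k - 1 ∧ e ⊆ univ.filter (fun v => θ ≤ x v i)) ∨
     e ⊆ univ \ (univ.biUnion (fun i : Fin k =>
        if (i : ℕ) < k - 1 then univ.filter (fun v => θ ≤ x v i) else ∅)))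

section Cut

variable {V : Type*} [Fintype V] [DecidableEq V] {k : ℕ} {x : V → Fin k → ℝ} {e : Finset V}
  {θ : ℝ}

lemma IsCutAt.exists_lt (h : IsCutAt k x e θ) (i : Fin k) (hi : (i : ℕ) < k - 1) :
    ∃ w ∈ e, x w i < θ := by
  by_contra! hle
  exact h (Or.inl ⟨i, hi, fun w hw => mem_filter.2 ⟨mem_univ w, hle w hw⟩⟩)

lemma IsCutAt.exists_le (h : IsCutAt k x e θ) :
    ∃ v ∈ e, ∃ i : Fin k, (i : ℕ) < k - 1 ∧ θ ≤ x v i := by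
  by_contra! hlt
  refine h (Or.inr fun v hv => mem_sdiff.2 ⟨mem_univ v, fun hmem => ?_⟩)
  obtain ⟨i, -, hvi⟩ := mem_biUnion.1 hmem
  split_ifs at hvi with hi
  · exact (hlt v hv i hi).not_ge (mem_filter.1 hvi).2
  · exact notMem_empty v hvi

lemma IsCutAt.mem_Ioc {u : V} {j : Fin k}
    (hmax : ∀ v ∈ e, ∀ i : Fin k, (i : ℕ) < k - 1 → x v i ≤ x u j)
    (hj : (j : ℕ) < k - 1) (h : IsCutAt k x e θ) :
    θ ∈ Set.Ioc (fmin e (x · j)) (x u j) := by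
  obtain ⟨w, hw, hwθ⟩ := h.exists_lt j hj
  obtain ⟨v, hv, i, hi, hθv⟩ := h.exists_le
  exact ⟨(fmin_le hw _).trans_lt hwθ, hθv.trans (hmax v hv i hi)⟩

lemma volume_setOf_isCutAt_le (re : V) (hxsum : ∀ v, ∑ i, x v i = 1) :
    volume {θ | IsCutAt k x e θ} ≤ ENNReal.ofReal (∑ i, (x re i - fmin e (x · i))) := by
  by_cases hlabel : ∃ v ∈ e, ∃ i : Fin k, (i : ℕ) < k - 1
  · obtain ⟨u, hu, j, hj, hmax⟩ := exists_max_of_exists x hlabel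
    calc volume {θ | IsCutAt k x e θ}
        ≤ volume (Set.Ioc (fmin e (x · j)) (x u j)) :=
          measure_mono fun θ => IsCutAt.mem_Ioc hmax hj
      _ = ENNReal.ofReal (x u j - fmin e (x · j)) := Real.volume_Ioc
      _ ≤ _ := ENNReal.ofReal_le_ofReal
          (sub_fmin_le_sum_sub_fmin hu ((hxsum u).trans (hxsum re).symm) j)
  · have hempty : {θ | IsCutAt k x e θ} = ∅ := Set.eq_empty_of_forall_notMem fun θ hθ =>
      let ⟨v, hv, i, hi, _⟩ := IsCutAt.exists_le hθ
      hlabel ⟨v, hv, i, hi⟩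
    simp [hempty]

end Cut

theorem half_rounding_cut_probability_general
    {V : Type*} [Fintype V] [DecidableEq V]
    (k : ℕ) (x : V → Fin k → ℝ)
    (hxsum : ∀ v, ∑ i, x v i = 1)
    (e : Finset V) (re : V) :
    MeasureTheory.volume
        {θ : ℝ | θ ∈ Set.Ioc (1/2 : ℝ) 1 ∧
          ¬ ((∃ i : Fin k, (i : ℕ) < k - 1 ∧
                e ⊆ Finset.univ.filter (fun v => θ ≤ x v i)) ∨
             e ⊆ Finset.univ \ (Finset.univ.biUnion (fun i : Fin k =>
                if (i : ℕ) < k - 1 then Finset.univ.filter (fun v => θ ≤ x v i)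
                else ∅)))}
      / MeasureTheory.volume (Set.Ioc (1/2 : ℝ) 1)
      ≤ ENNReal.ofReal (2 * ∑ i, (x re i - fmin e (fun v => x v i))) := by
  refine ENNReal.div_le_of_le_mul ?_
  calc _ ≤ volume {θ | IsCutAt k x e θ} := measure_mono fun θ hθ => hθ.2
    _ ≤ ENNReal.ofReal (∑ i, (x re i - fmin e (x · i))) := volume_setOf_isCutAt_le re hxsum
    _ = _ := by
      rw [Real.volume_Ioc, ← ENNReal.ofReal_mul' (by norm_num)]
      congr 1
      ring

/-- **Half-rounding cuts a hyperedge with probability at most `2 d(e)`.**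
Let `x` be a fractional allocation on a finite set `V`, and let `e ⊆ V` be a
nonempty hyperedge with representative `r(e) ∈ e`; let
`d(e) = ∑_i (x(r(e),i) − min_{v∈e} x(v,i))`. For `θ ∈ (1/2, 1]` set
`A(i,θ) = {v : x(v,i) ≥ θ}` for `i = 1,…,k−1` and
`U(θ) = V \ (A(1,θ) ∪ ⋯ ∪ A(k−1,θ))`; `e` is cut at `θ` if it is not entirely
contained in one of the parts `A(1,θ), …, A(k−1,θ), U(θ)`. Then the probability
over a uniformly random `θ ∈ (1/2,1]` that `e` is cut is at most `2 d(e)`. -/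
theorem half_rounding_cut_probability
    {V : Type*} [Fintype V] [DecidableEq V]
    (k : ℕ) (x : V → Fin k → ℝ)
    (hx01 : ∀ v i, x v i ∈ Set.Icc (0:ℝ) 1)
    (hxsum : ∀ v, ∑ i, x v i = 1)
    (e : Finset V) (he : e.Nonempty) (re : V) (hre : re ∈ e) :
    MeasureTheory.volume
        {θ : ℝ | θ ∈ Set.Ioc (1/2 : ℝ) 1 ∧
          ¬ ((∃ i : Fin k, (i : ℕ) < k - 1 ∧
                e ⊆ Finset.univ.filter (fun v => θ ≤ x v i)) ∨
             e ⊆ Finset.univ \ (Finset.univ.biUnion (fun i : Fin k =>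
                if (i : ℕ) < k - 1 then Finset.univ.filter (fun v => θ ≤ x v i)
                else ∅)))}
      / MeasureTheory.volume (Set.Ioc (1/2 : ℝ) 1)
      ≤ ENNReal.ofReal (2 * ∑ i, (x re i - fmin e (fun v => x v i))) :=
  half_rounding_cut_probability_general k x hxsum e re
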